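/- arXiv:2109.04377 — 5 statements merged into one kernel-verified Lean document; each statement's English description precedes it below -/
import Mathlib

section
/- Let A ⊆ ℤ^d be a finite set containing points v₁,…,v_{d+1} whose lifts ṽ₁,…,ṽ_{d+1} are linearly independent, such that the convex hull Δ_A equals the simplex with vertices v₁,…,v_{d+1}. Let C_A = span_ℕ{ã : a ∈ A} ⊆ ℤ^{d+1} be the cone of A, let Λ = span_ℤ(ṽ₁,…,ṽ_{d+1}), and let N_Λ = [ℤ^{d+1} : Λ]. If (α, M) ∈ C_A (with M its last coordinate, the height) is minimal, meaning that (α, M) − ṽᵢ ∉ C_A for every i = 1,…,d+1, then M ≤ N_Λ − 1. -/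
/-- The lift of `v ∈ ℤ^d` to `ṽ = (v, 1) ∈ ℤ^{d+1}`. -/
def liftZ {d : ℕ} (u : Fin d → ℤ) : Fin (d + 1) → ℤ := Fin.snoc u 1

/-- The coercion of an integer point to a real point. -/
def castR {d : ℕ} (u : Fin d → ℤ) : Fin d → ℝ := fun i => (u i : ℝ)

/-- The cone of a set `A ⊆ ℤ^d`: the ℕ-span of the lifts of the elements of `A`. -/
def coneOf {d : ℕ} (A : Set (Fin d → ℤ)) : AddSubmonoid (Fin (d + 1) → ℤ) :=
  AddSubmonoid.closure (liftZ '' A)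

/-!
Write `x = ã₁ + ⋯ + ã_M` with `aᵢ ∈ A`. If `M ≥ N_Λ`, two of the `N_Λ + 1` partial sums
`ã₁ + ⋯ + ã_k`, `0 ≤ k ≤ M`, agree modulo `Λ`, so some nonempty block `z = ã_{k+1} + ⋯ + ã_l`
lies in `Λ ∩ C_A`. As `Δ_A` is the simplex on the `vⱼ`, every lifted point of `A`, hence every
point of `C_A`, has nonnegative real coordinates in the basis `ṽ₁, …, ṽ_{d+1}`; for `z ∈ Λ` these
coordinates are integers summing to the height of `z`, which is positive. So some coordinate
`cⱼ` of `z` is at least `1`, `z - ṽⱼ` is still an ℕ-combination of the `ṽᵢ`, and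
`x - ṽⱼ ∈ C_A`, contradicting minimality.
-/

lemma liftZ_last {d : ℕ} (u : Fin d → ℤ) : liftZ u (Fin.last d) = 1 :=
  Fin.snoc_last _ _

@[simp]
lemma castR_zero {d : ℕ} : castR (0 : Fin d → ℤ) = 0 := by
  ext; simp [castR]

lemma castR_add {d : ℕ} (u w : Fin d → ℤ) : castR (u + w) = castR u + castR w := by
  ext; simp [castR]

lemma castR_liftZ {d : ℕ} (u : Fin d → ℤ) : castR (liftZ u) = Fin.snoc (castR u) 1 := by
  ext i
  induction i using Fin.lastCases <;> simp [castR, liftZ]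

lemma snoc_one_add_smul {d : ℕ} (p q : Fin d → ℝ) {a b : ℝ} (hab : a + b = 1) :
    (Fin.snoc (a • p + b • q) 1 : Fin (d + 1) → ℝ) = a • Fin.snoc p 1 + b • Fin.snoc q 1 := by
  ext i
  induction i using Fin.lastCases <;> simp [hab]

lemma linearIndependent_castR {n : ℕ} {g : Fin n → Fin n → ℤ} (hg : LinearIndependent ℤ g) :
    LinearIndependent ℝ fun j => castR (g j) := by
  have hdet : (Matrix.of g).det ≠ 0 := fun h0 => by
    obtain ⟨c, hc0, hc⟩ := Matrix.exists_vecMul_eq_zero_iff.mpr h0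
    exact hc0 (funext (Fintype.linearIndependent_iff.mp hg c (by rwa [Matrix.vecMul_eq_sum] at hc)))
  exact Matrix.linearIndependent_rows_of_det_ne_zero (A := (Matrix.of g).map (Int.cast : ℤ → ℝ))
    (by rw [← Int.cast_det]; exact_mod_cast hdet)

lemma finiteIndex_closure_range {ι : Type*} [Finite ι] {g : ι → ι → ℤ}
    (hg : LinearIndependent ℤ g) : (AddSubgroup.closure (Set.range g)).FiniteIndex :=
  ⟨Int.addSubgroup_index_ne_zero_iff.mpr
    ⟨(AddEquiv.addSubgroupCongr (Submodule.span_int_eq_addSubgroupClosure _).symm).trans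
      (Module.Basis.span hg).equivFun.toAddEquiv⟩⟩

lemma AddSubgroup.exists_infix_sum_mem_of_index_le_length {G : Type*} [AddCommGroup G]
    (H : AddSubgroup G) [H.FiniteIndex] (l : List G) (hl : H.index ≤ l.length) :
    ∃ l₁ l₂ l₃, l = l₁ ++ l₂ ++ l₃ ∧ l₂ ≠ [] ∧ l₂.sum ∈ H := by
  have := Fintype.ofFinite (G ⧸ H)
  have hcard : Fintype.card (G ⧸ H) < Fintype.card (Fin (H.index + 1)) := by
    simp [AddSubgroup.index, Nat.card_eq_fintype_card]
  obtain ⟨i, j, hij, hprefix⟩ := Fintype.exists_ne_map_eq_of_card_lt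
    (fun k : Fin (H.index + 1) => ((l.take k).sum : G ⧸ H)) hcard
  wlog hlt : (i : ℕ) < j generalizing i j
  · exact this j i hij.symm hprefix.symm (by omega)
  refine ⟨l.take i, (l.drop i).take (j - i), (l.drop i).drop (j - i), by simp, ?_, ?_⟩
  · simp only [ne_eq, List.take_eq_nil_iff, List.drop_eq_nil_iff]
    omega
  · have hj : l.take j = l.take i ++ (l.drop i).take (j - i) := by
      rw [← List.take_add]; congr; omega
    simpa [hj, QuotientAddGroup.eq] using hprefix

section RealBasis

variable {n : ℕ} {g : Fin n → Fin n → ℤ} (hg : LinearIndependent ℤ g)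

noncomputable def realBasis : Module.Basis (Fin n) ℝ (Fin n → ℝ) :=
  basisOfLinearIndependentOfCardEqFinrank' _ (linearIndependent_castR hg) (by simp)

lemma realBasis_apply (j : Fin n) : realBasis hg j = castR (g j) := by
  simp [realBasis]

lemma realBasis_repr_castR_sum (c : Fin n → ℤ) :
    (realBasis hg).repr (castR (∑ j, c j • g j)) = fun j => (c j : ℝ) := by
  have hcast : castR (∑ j, c j • g j) = ∑ j, (c j : ℝ) • realBasis hg j := by
    ext i
    simp [castR, realBasis_apply, Finset.sum_apply]
  rw [hcast, Module.Basis.repr_sum_self]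

end RealBasis

section Cone

variable {d : ℕ} {A : Set (Fin d → ℤ)} {v : Fin (d + 1) → Fin d → ℤ}

lemma liftZ_mem_coneOf {a : Fin d → ℤ} (ha : a ∈ A) : liftZ a ∈ coneOf A :=
  AddSubmonoid.subset_closure ⟨a, ha, rfl⟩

lemma list_sum_mem_coneOf {l : List (Fin (d + 1) → ℤ)} (hl : ∀ w ∈ l, w ∈ liftZ '' A) :
    l.sum ∈ coneOf A :=
  AddSubmonoid.list_sum_mem _ fun w hw => AddSubmonoid.subset_closure (hl w hw)

lemma list_sum_last_eq_length {l : List (Fin (d + 1) → ℤ)} (hl : ∀ w ∈ l, w ∈ liftZ '' A) :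
    l.sum (Fin.last d) = l.length := by
  induction l with
  | nil => simp
  | cons w l ih =>
    obtain ⟨⟨a, -, rfl⟩, htail⟩ := List.forall_mem_cons.mp hl
    simp [liftZ_last, ih htail, add_comm]

lemma sum_smul_liftZ_mem_coneOf (hvA : ∀ j, v j ∈ A) {c : Fin (d + 1) → ℤ} (hc : ∀ j, 0 ≤ c j) :
    ∑ j, c j • liftZ (v j) ∈ coneOf A := by
  lift c to Fin (d + 1) → ℕ using hc
  simp only [natCast_zsmul]
  exact sum_mem fun j _ => nsmul_mem (liftZ_mem_coneOf (hvA j)) _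

lemma realBasis_repr_liftZ_nonneg (hli : LinearIndependent ℤ fun j => liftZ (v j))
    {a : Fin d → ℤ} (ha : castR a ∈ convexHull ℝ (Set.range fun j => castR (v j)))
    (j : Fin (d + 1)) : 0 ≤ (realBasis hli).repr (castR (liftZ a)) j := by
  set S : Set (Fin d → ℝ) := {p | 0 ≤ (realBasis hli).repr (Fin.snoc p 1) j}
  have hS : Convex ℝ S := fun p hp q hq s t hs ht hst => by
    simp only [S, Set.mem_ofPred_eq, snoc_one_add_smul p q hst, map_add, map_smul,
      Finsupp.add_apply, Finsupp.smul_apply, smul_eq_mul] at hp hq ⊢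
    positivity
  have hvS : Set.range (fun j => castR (v j)) ⊆ S := by
    rintro _ ⟨i, rfl⟩
    rw [Set.mem_ofPred_eq, ← castR_liftZ, ← realBasis_apply hli, Module.Basis.repr_self,
      Finsupp.single_apply]
    split_ifs <;> norm_num
  rw [castR_liftZ]
  exact convexHull_min hvS hS ha

lemma realBasis_repr_nonneg_of_mem_coneOf (hli : LinearIndependent ℤ fun j => liftZ (v j))
    (hA : castR '' A ⊆ convexHull ℝ (Set.range fun j => castR (v j)))
    {z : Fin (d + 1) → ℤ} (hz : z ∈ coneOf A) (j : Fin (d + 1)) :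
    0 ≤ (realBasis hli).repr (castR z) j := by
  induction hz using AddSubmonoid.closure_induction with
  | mem _ h =>
    obtain ⟨a, ha, rfl⟩ := h
    exact realBasis_repr_liftZ_nonneg hli (hA ⟨a, ha, rfl⟩) j
  | zero => simp
  | add y z _ _ hy hz =>
    rw [castR_add, map_add, Finsupp.add_apply]
    exact add_nonneg hy hz

lemma exists_sub_liftZ_mem_coneOf (hvA : ∀ j, v j ∈ A)
    (hli : LinearIndependent ℤ fun j => liftZ (v j))
    (hA : castR '' A ⊆ convexHull ℝ (Set.range fun j => castR (v j)))
    {z : Fin (d + 1) → ℤ} (hzΛ : z ∈ AddSubgroup.closure (Set.range fun j => liftZ (v j)))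
    (hzC : z ∈ coneOf A) (hz : 0 < z (Fin.last d)) :
    ∃ j, z - liftZ (v j) ∈ coneOf A := by
  rw [← Submodule.span_int_eq_addSubgroupClosure, Submodule.mem_toAddSubgroup,
    Submodule.mem_span_range_iff_exists_fun] at hzΛ
  obtain ⟨c, rfl⟩ := hzΛ
  have hc : ∀ j, 0 ≤ c j := fun j => by
    have := realBasis_repr_nonneg_of_mem_coneOf hli hA hzC j
    rw [realBasis_repr_castR_sum] at this
    exact Int.cast_nonneg_iff.mp this
  obtain ⟨j, hj⟩ : ∃ j, 0 < c j := by
    by_contra! hle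
    simp only [Finset.sum_apply, Pi.smul_apply, liftZ_last, smul_eq_mul, mul_one] at hz
    exact hz.not_ge (Finset.sum_nonpos fun i _ => hle i)
  refine ⟨j, ?_⟩
  have hsub : ∑ i, c i • liftZ (v i) - liftZ (v j) =
      ∑ i, (c - Pi.single j 1 : Fin (d + 1) → ℤ) i • liftZ (v i) := by
    simp [sub_smul, Finset.sum_sub_distrib, Pi.single_apply]
  rw [hsub]
  refine sum_smul_liftZ_mem_coneOf hvA fun i => ?_
  rcases eq_or_ne i j with rfl | hij
  · simpa using Int.add_one_le_of_lt hj
  · simpa [hij] using hc i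

end Cone

theorem minimal_element_height_bound_general
    (d : ℕ) (A : Set (Fin d → ℤ))
    (v : Fin (d + 1) → Fin d → ℤ) (hvA : ∀ j, v j ∈ A)
    (hli : LinearIndependent ℤ fun j => liftZ (v j))
    (hsimplex : convexHull ℝ (castR '' A) = convexHull ℝ (Set.range fun j => castR (v j)))
    (x : Fin (d + 1) → ℤ) (hx : x ∈ coneOf A)
    (hmin : ∀ j, x - liftZ (v j) ∉ coneOf A) :
    x (Fin.last d) ≤ ((AddSubgroup.closure (Set.range fun j => liftZ (v j))).index : ℤ) - 1 := by
  set Λ := AddSubgroup.closure (Set.range fun j => liftZ (v j))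
  have : Λ.FiniteIndex := finiteIndex_closure_range hli
  obtain ⟨l, hlA, rfl⟩ := AddSubmonoid.exists_list_of_mem_closure hx
  by_contra! hlarge
  rw [list_sum_last_eq_length hlA] at hlarge
  obtain ⟨l₁, l₂, l₃, rfl, hne, hl₂Λ⟩ :=
    Λ.exists_infix_sum_mem_of_index_le_length l (by omega)
  simp only [List.mem_append, or_imp, forall_and] at hlA
  obtain ⟨⟨hl₁, hl₂⟩, hl₃⟩ := hlA
  obtain ⟨j, hj⟩ := exists_sub_liftZ_mem_coneOf hvA hli (hsimplex ▸ subset_convexHull ℝ _) hl₂Λ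
    (list_sum_mem_coneOf hl₂)
    (by rw [list_sum_last_eq_length hl₂]; exact_mod_cast List.length_pos_iff.mpr hne)
  refine hmin j ?_
  rw [show (l₁ ++ l₂ ++ l₃).sum - liftZ (v j) = l₁.sum + l₃.sum + (l₂.sum - liftZ (v j)) by
    simp only [List.sum_append]; abel]
  exact add_mem (add_mem (list_sum_mem_coneOf hl₁) (list_sum_mem_coneOf hl₃)) hj

theorem minimal_element_height_bound
    (d : ℕ) (A : Set (Fin d → ℤ)) (hAfin : A.Finite)
    (v : Fin (d + 1) → Fin d → ℤ) (hvA : ∀ j, v j ∈ A)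
    (hli : LinearIndependent ℤ fun j => liftZ (v j))
    (hsimplex : convexHull ℝ (castR '' A) = convexHull ℝ (Set.range fun j => castR (v j)))
    (x : Fin (d + 1) → ℤ) (hx : x ∈ coneOf A)
    (hmin : ∀ j, x - liftZ (v j) ∉ coneOf A) :
    x (Fin.last d) ≤ ((AddSubgroup.closure (Set.range fun j => liftZ (v j))).index : ℤ) - 1 :=
  minimal_element_height_bound_general d A v hvA hli hsimplex x hx hmin
end

section
/- Let v₁,…,v_{d+2} ∈ ℤ^d be d+2 points such that v₁,…,v_{d+1} are affinely independent, and suppose λ₁,…,λ_{d+2} ∈ ℤ, not all zero, satisfy λ₁ṽ₁ + ⋯ + λ_{d+2}ṽ_{d+2} = 0 in ℤ^{d+1} and |λᵢ| = d!·vol(Δᵢ) for every i, where Δᵢ is the convex hull of {v₁,…,v_{d+2}} \ {vᵢ}. Then the sum of the positive coefficients satisfies Σ_{i : λᵢ > 0} λᵢ = d!·vol(Δ_A), where Δ_A is the convex hull of {v₁,…,v_{d+2}}. -/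
/-!
Since `v₁, …, v_{d+1}` are affinely independent, every real affine relation among the `d + 2`
points is a multiple of `λ`. Shifting the barycentric coordinates of a point of `conv A` along `λ`
until the first one vanishes shows that `conv A` is covered by the simplices `Δᵢ` with `λᵢ > 0`.
Two of them, `Δᵢ` and `Δᵢ'`, meet only in the hull of the remaining `d` points, a null set: the
difference of two barycentric representations of a common point is a multiple of `λ` which is
`≤ 0` at `i` and `≥ 0` at `i'`, hence zero. So `vol (conv A) = ∑_{λᵢ > 0} vol Δᵢ`.
-/

open MeasureTheory

theorem AffineIndependent.map_algebraMap {K L ι ι' : Type*} [Field K] [Field L] [Algebra K L]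
    [Finite ι'] {p : ι → ι' → K} (hp : AffineIndependent K p) :
    AffineIndependent L fun i => algebraMap K L ∘ p i := by
  rcases isEmpty_or_nonempty ι with hι | ⟨⟨i₁⟩⟩
  · exact affineIndependent_of_subsingleton L _
  rw [affineIndependent_iff_linearIndependent_vsub K _ i₁] at hp
  rw [affineIndependent_iff_linearIndependent_vsub L _ i₁]
  have hsub : (fun i : {x // x ≠ i₁} => algebraMap K L ∘ p i -ᵥ algebraMap K L ∘ p i₁) =
      fun i : {x // x ≠ i₁} => algebraMap K L ∘ (p i -ᵥ p i₁) := by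
    ext
    simp
  rw [hsub]
  exact linearIndependent_algebraMap_comp_iff.mpr hp

theorem exists_eq_smul_of_affine_relation {k E : Type*} [Field k] [AddCommGroup E] [Module k E]
    {m : ℕ} {p : Fin (m + 2) → E} (hp : AffineIndependent k (p ∘ Fin.castSucc))
    {c : Fin (m + 2) → k} (hc : c ≠ 0) (hc₀ : ∑ i, c i = 0) (hcp : ∑ i, c i • p i = 0)
    {γ : Fin (m + 2) → k} (hγ₀ : ∑ i, γ i = 0) (hγp : ∑ i, γ i • p i = 0) :
    ∃ a : k, γ = a • c := by
  have eq_zero_of_last : ∀ w : Fin (m + 2) → k, ∑ i, w i = 0 → ∑ i, w i • p i = 0 →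
      w (Fin.last _) = 0 → w = 0 := by
    intro w hw hwp hlast
    rw [Fin.sum_univ_castSucc, hlast, add_zero] at hw
    rw [Fin.sum_univ_castSucc, hlast, zero_smul, add_zero] at hwp
    have := hp.eq_zero_of_sum_eq_zero hw hwp
    ext i
    induction i using Fin.lastCases with
    | last => exact hlast
    | cast i => exact this i (Finset.mem_univ _)
  have hc_last : c (Fin.last _) ≠ 0 := fun h => hc (eq_zero_of_last c hc₀ hcp h)
  refine ⟨γ (Fin.last _) / c (Fin.last _), sub_eq_zero.mp (eq_zero_of_last _ ?_ ?_ ?_)⟩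
  · simp [Finset.sum_sub_distrib, ← Finset.mul_sum, hγ₀, hc₀]
  · simp [sub_smul, Finset.sum_sub_distrib, mul_smul, ← Finset.smul_sum, hγp, hcp]
  · simp [hc_last]

theorem mem_convexHull_image_iff {ι E : Type*} [Fintype ι] [AddCommGroup E] [Module ℝ E]
    {p : ι → E} {s : Set ι} {x : E} :
    x ∈ convexHull ℝ (p '' s) ↔ ∃ w : ι → ℝ, (∀ i, 0 ≤ w i) ∧ (∀ i ∉ s, w i = 0) ∧
      ∑ i, w i = 1 ∧ ∑ i, w i • p i = x := by
  classical
  constructor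
  · refine fun hx => convexHull_min (t := {y | ∃ w : ι → ℝ, (∀ i, 0 ≤ w i) ∧
      (∀ i ∉ s, w i = 0) ∧ ∑ i, w i = 1 ∧ ∑ i, w i • p i = y}) ?_ ?_ hx
    · rintro _ ⟨i, hi, rfl⟩
      refine ⟨Pi.single i 1, fun j => ?_, fun j hj => ?_, by simp, by simp [Pi.single_apply]⟩
      · by_cases h : j = i <;> simp [h]
      · simp [show j ≠ i by rintro rfl; exact hj hi]
    · rintro _ ⟨w, hw, hws, hw₁, rfl⟩ _ ⟨w', hw', hws', hw₁', rfl⟩ a b ha hb hab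
      refine ⟨a • w + b • w', fun i => ?_, fun i hi => ?_, ?_, ?_⟩
      · exact add_nonneg (mul_nonneg ha (hw i)) (mul_nonneg hb (hw' i))
      · simp [hws i hi, hws' i hi]
      · simp [Finset.sum_add_distrib, ← Finset.mul_sum, hw₁, hw₁', hab]
      · simp [add_smul, mul_smul, Finset.sum_add_distrib, ← Finset.smul_sum]
  · rintro ⟨w, hw, hws, hw₁, rfl⟩
    have hsupp : ∀ i ∈ Finset.univ, w i ≠ 0 → i ∈ s := fun i _ => not_imp_comm.mp (hws i)
    rw [← Finset.sum_filter_of_ne fun i hi h => hsupp i hi (left_ne_zero_of_smul h)]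
    refine (convex_convexHull ℝ _).sum_mem (fun i _ => hw i) ?_ fun i hi =>
      subset_convexHull ℝ _ ⟨i, (Finset.mem_filter.mp hi).2, rfl⟩
    rw [Finset.sum_filter_of_ne fun i hi h => hsupp i hi h, hw₁]

theorem exists_pos_sub_mul_nonneg_eq_zero {ι : Type*} [Fintype ι] {μ c : ι → ℝ}
    (hμ : ∀ i, 0 ≤ μ i) (hpos : ∃ i, 0 < c i) :
    ∃ i, 0 < c i ∧ ∃ t : ℝ, (∀ j, 0 ≤ μ j - t * c j) ∧ μ i - t * c i = 0 := by
  classical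
  obtain ⟨i, hi, hmin⟩ := (Finset.univ.filter fun j => 0 < c j).exists_min_image
    (fun j => μ j / c j) (by simpa [Finset.filter_nonempty_iff] using hpos)
  replace hi : 0 < c i := (Finset.mem_filter.mp hi).2
  refine ⟨i, hi, μ i / c i, fun j => ?_, by field_simp; ring⟩
  rcases lt_or_ge 0 (c j) with hj | hj
  · have := hmin j (by simpa using hj)
    rw [le_div_iff₀ hj] at this
    linarith
  · nlinarith [div_nonneg (hμ i) hi.le, hμ j]

theorem convexHull_range_eq_biUnion_of_affine_relation {ι E : Type*} [Fintype ι]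
    [AddCommGroup E] [Module ℝ E] {p : ι → E} {c : ι → ℝ} (hc₀ : ∑ i, c i = 0)
    (hcp : ∑ i, c i • p i = 0) (hpos : ∃ i, 0 < c i) :
    convexHull ℝ (Set.range p) =
      ⋃ i ∈ Finset.univ.filter (fun i => 0 < c i), convexHull ℝ (p '' {j | j ≠ i}) := by
  refine subset_antisymm (fun x hx => ?_)
    (Set.iUnion₂_subset fun i _ => convexHull_mono (Set.image_subset_range _ _))
  rw [← Set.image_univ, mem_convexHull_image_iff] at hx
  obtain ⟨μ, hμ, -, hμ₁, rfl⟩ := hx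
  obtain ⟨i, hi, t, hν, hνi⟩ := exists_pos_sub_mul_nonneg_eq_zero hμ hpos
  refine Set.mem_biUnion (by simpa using hi) (mem_convexHull_image_iff.mpr
    ⟨fun j => μ j - t * c j, hν, fun j hj => ?_, ?_, ?_⟩)
  · obtain rfl : j = i := by simpa using hj
    exact hνi
  · simp [Finset.sum_sub_distrib, ← Finset.mul_sum, hc₀, hμ₁]
  · simp [sub_smul, mul_smul, Finset.sum_sub_distrib, ← Finset.smul_sum, hcp]

theorem convexHull_image_ne_inter_subset {ι E : Type*} [Fintype ι] [AddCommGroup E]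
    [Module ℝ E] {p : ι → E} {c : ι → ℝ}
    (hunique : ∀ γ : ι → ℝ, ∑ i, γ i = 0 → ∑ i, γ i • p i = 0 → ∃ a : ℝ, γ = a • c)
    {i i' : ι} (hi : 0 < c i) (hi' : 0 < c i') :
    convexHull ℝ (p '' {j | j ≠ i}) ∩ convexHull ℝ (p '' {j | j ≠ i'}) ⊆
      convexHull ℝ (p '' {j | j ≠ i ∧ j ≠ i'}) := by
  rintro x ⟨hx, hx'⟩
  obtain ⟨α, hα, hαs, hα₁, rfl⟩ := mem_convexHull_image_iff.mp hx
  obtain ⟨β, hβ, hβs, hβ₁, hβx⟩ := mem_convexHull_image_iff.mp hx'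
  obtain ⟨a, ha⟩ := hunique (α - β) (by simp [Finset.sum_sub_distrib, hα₁, hβ₁])
    (by simp [sub_smul, Finset.sum_sub_distrib, hβx])
  have hαi : α i = 0 := hαs i (by simp)
  have hβi' : β i' = 0 := hβs i' (by simp)
  have hai : α i - β i = a * c i := by simpa using congrFun ha i
  have hai' : α i' - β i' = a * c i' := by simpa using congrFun ha i'
  -- the relation `α - β` is negative at `i` and positive at `i'`, so it vanishes
  have ha₀ : a = 0 := le_antisymm (by nlinarith [hβ i]) (by nlinarith [hα i'])
  have hαβ : α = β := sub_eq_zero.mp (by rw [ha, ha₀, zero_smul])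
  refine mem_convexHull_image_iff.mpr ⟨α, hα, fun j hj => ?_, hα₁, rfl⟩
  rcases eq_or_ne j i with rfl | hji
  · exact hαi
  · obtain rfl : j = i' := by simpa [hji] using hj
    rw [hαβ, hβi']

theorem addHaar_convexHull_range_eq_zero {ι E : Type*} [Fintype ι] [NormedAddCommGroup E]
    [NormedSpace ℝ E] [MeasurableSpace E] [BorelSpace E] [FiniteDimensional ℝ E]
    (μ : Measure E) [μ.IsAddHaarMeasure] (p : ι → E)
    (hcard : Fintype.card ι ≤ Module.finrank ℝ E) : μ (convexHull ℝ (Set.range p)) = 0 := by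
  rcases Nat.eq_zero_or_eq_succ_pred (Fintype.card ι) with h | h
  · have : IsEmpty ι := Fintype.card_eq_zero_iff.mp h
    simp [Set.range_eq_empty]
  refine measure_mono_null (convexHull_subset_affineSpan _)
    (Measure.addHaar_affineSubspace μ _ fun htop => ?_)
  have := finrank_vectorSpan_range_le ℝ p h
  rw [← direction_affineSpan, htop, AffineSubspace.direction_top, finrank_top] at this
  omega

theorem addHaar_convexHull_range_eq_sum_of_affine_relation {ι E : Type*} [Fintype ι]
    [NormedAddCommGroup E] [NormedSpace ℝ E] [MeasurableSpace E] [BorelSpace E]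
    [FiniteDimensional ℝ E] (μ : Measure E) [μ.IsAddHaarMeasure] {p : ι → E} {c : ι → ℝ}
    (hcard : Fintype.card ι ≤ Module.finrank ℝ E + 2) (hc₀ : ∑ i, c i = 0)
    (hcp : ∑ i, c i • p i = 0) (hpos : ∃ i, 0 < c i)
    (hunique : ∀ γ : ι → ℝ, ∑ i, γ i = 0 → ∑ i, γ i • p i = 0 → ∃ a : ℝ, γ = a • c) :
    μ (convexHull ℝ (Set.range p)) =
      ∑ i ∈ Finset.univ.filter (fun i => 0 < c i), μ (convexHull ℝ (p '' {j | j ≠ i})) := by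
  classical
  rw [convexHull_range_eq_biUnion_of_affine_relation hc₀ hcp hpos]
  refine measure_biUnion_finset₀ (fun i hi i' hi' hii' => ?_) fun i _ =>
    ((Set.toFinite _).isCompact_convexHull (𝕜 := ℝ)).isClosed.measurableSet.nullMeasurableSet
  replace hi : 0 < c i := (Finset.mem_filter.mp hi).2
  replace hi' : 0 < c i' := (Finset.mem_filter.mp hi').2
  refine measure_mono_null (convexHull_image_ne_inter_subset hunique hi hi') ?_
  rw [Set.image_eq_range]
  refine addHaar_convexHull_range_eq_zero μ _ ?_
  have hfilter : Finset.univ.filter (· ∈ {j | j ≠ i ∧ j ≠ i'}) =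
      (Finset.univ.erase i).erase i' := by
    ext
    simp [and_comm]
  rw [Fintype.card_subtype, hfilter, Finset.card_erase_of_mem (by simpa using hii'.symm),
    Finset.card_erase_of_mem (Finset.mem_univ _), Finset.card_univ]
  omega

theorem sum_smul_liftZ_eq_zero_iff {ι : Type*} [Fintype ι] {d : ℕ} (v : ι → Fin d → ℤ)
    (c : ι → ℤ) :
    ∑ i, c i • liftZ (v i) = 0 ↔ ∑ i, c i = 0 ∧ ∑ i, c i • v i = 0 := by
  constructor
  · intro h
    exact ⟨by simpa [liftZ] using congrFun h (Fin.last d),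
      funext fun k => by simpa [liftZ] using congrFun h k.castSucc⟩
  · rintro ⟨h₀, h⟩
    ext k
    induction k using Fin.lastCases with
    | last => simpa [liftZ] using h₀
    | cast k => simpa [liftZ] using congrFun h k

theorem affineIndependent_castR {ι : Type*} {d : ℕ} {v : ι → Fin d → ℤ}
    (hv : AffineIndependent ℚ fun j i => (v j i : ℚ)) : AffineIndependent ℝ (castR ∘ v) := by
  have hcast : castR ∘ v = fun j => algebraMap ℚ ℝ ∘ fun i => (v j i : ℚ) := by
    ext
    simp [castR]
  rw [hcast]
  exact hv.map_algebraMap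

theorem castR_sum_smul {ι : Type*} [Fintype ι] {d : ℕ} (c : ι → ℤ) (v : ι → Fin d → ℤ) :
    castR (∑ i, c i • v i) = ∑ i, (c i : ℝ) • castR (v i) := by
  ext
  simp [castR]

theorem sum_of_positive_coefficients_eq_normalized_volume
    (d : ℕ) (v : Fin (d + 2) → Fin d → ℤ)
    (haff : AffineIndependent ℚ fun j : Fin (d + 1) =>
      fun i => ((v (Fin.castSucc j) i : ℚ)))
    (lam : Fin (d + 2) → ℤ) (hne : lam ≠ 0)
    (hzero : ∑ i, lam i • liftZ (v i) = 0)
    (hvol : ∀ i, (((lam i).natAbs : ℝ)) = (d.factorial : ℝ) *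
      (volume (convexHull ℝ (castR '' (v '' {j | j ≠ i})))).toReal) :
    ((∑ i ∈ Finset.univ.filter fun i => 0 < lam i, lam i : ℤ) : ℝ)
      = (d.factorial : ℝ) * (volume (convexHull ℝ (castR '' Set.range v))).toReal := by
  obtain ⟨hsum, hsmul⟩ := (sum_smul_liftZ_eq_zero_iff v lam).mp hzero
  set c : Fin (d + 2) → ℝ := fun i => lam i
  have hc₀ : ∑ i, c i = 0 := by simp only [c]; exact_mod_cast hsum
  have hcp : ∑ i, c i • castR (v i) = 0 := by
    rw [← castR_sum_smul, hsmul]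
    exact funext fun _ => Int.cast_zero
  have hc : c ≠ 0 := fun h => hne (funext fun i => by simpa [c] using congrFun h i)
  obtain ⟨i₀, -, hi₀⟩ := Finset.exists_pos_of_sum_zero_of_exists_nonzero c hc₀
    (by simpa [funext_iff] using hc)
  have hvolume := addHaar_convexHull_range_eq_sum_of_affine_relation volume (p := castR ∘ v)
    (by simp) hc₀ hcp ⟨i₀, hi₀⟩ fun γ hγ₀ hγp =>
      exists_eq_smul_of_affine_relation (affineIndependent_castR haff) hc hc₀ hcp hγ₀ hγp
  simp only [Set.range_comp, Set.image_comp, c, Int.cast_pos] at hvolume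
  rw [hvolume, ENNReal.toReal_sum fun i _ =>
    ((Set.toFinite _).isCompact_convexHull (𝕜 := ℝ)).measure_lt_top.ne, Finset.mul_sum,
    Int.cast_sum]
  refine Finset.sum_congr rfl fun i hi => ?_
  rw [← hvol i, Nat.cast_natAbs, Int.cast_abs,
    abs_of_pos (Int.cast_pos.mpr (Finset.mem_filter.mp hi).2)]
end

section
/- Let v₁,…,v_{d+1} ∈ ℤ^d be points whose lifts ṽ₁,…,ṽ_{d+1} are linearly independent, let Λ = span_ℤ(ṽ₁,…,ṽ_{d+1}), and suppose (0,1) = (a₁/q₁)ṽ₁ + ⋯ + (a_{d+1}/q_{d+1})ṽ_{d+1} where aᵢ ∈ ℕ, qᵢ ∈ ℕ are positive with gcd(aᵢ, qᵢ) = 1 and Σᵢ aᵢ/qᵢ = 1. Then the order of the element (0,1) + Λ in the quotient group ℤ^{d+1}/Λ equals lcm(q₁,…,q_{d+1}); consequently [ℤ^{d+1} : span_ℤ((0,1), ṽ₁,…,ṽ_{d+1})] = [ℤ^{d+1} : Λ] / lcm(q₁,…,q_{d+1}). -/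
theorem AddSubgroup.addOrderOf_mul_index_sup_zmultiples {G : Type*} [AddCommGroup G]
    (H : AddSubgroup G) (x : G) :
    addOrderOf (x : G ⧸ H) * (H ⊔ AddSubgroup.zmultiples x).index = H.index := by
  have hmap : (H ⊔ AddSubgroup.zmultiples x).map (QuotientAddGroup.mk' H)
      = AddSubgroup.zmultiples (x : G ⧸ H) := by
    rw [AddSubgroup.map_sup, AddMonoidHom.map_zmultiples,
      (AddSubgroup.map_eq_bot_iff H).2 (QuotientAddGroup.ker_mk' H).ge, bot_sup_eq]
    rfl
  rw [← Nat.card_zmultiples, ← hmap,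
    ← AddSubgroup.index_map_eq _ (QuotientAddGroup.mk'_surjective H)
      (by rw [QuotientAddGroup.ker_mk']; exact le_sup_left),
    AddSubgroup.card_mul_index, AddSubgroup.index_eq_card]

theorem LinearIndependent.intCast {ι κ : Type*} {f : ι → κ → ℤ} (hli : LinearIndependent ℤ f) :
    LinearIndependent ℚ fun j i => (f j i : ℚ) := by
  rw [← LinearIndependent.iff_fractionRing ℤ ℚ]
  exact hli.map' ((Int.castAddHom ℚ).toIntLinearMap.compLeft κ)
    (LinearMap.ker_eq_bot.2 fun x y h => funext fun i => Int.cast_injective (congrFun h i))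

theorem zsmul_mem_closure_range_iff {ι κ : Type*} [Fintype ι] {f : ι → κ → ℤ}
    (hli : LinearIndependent ℤ f) {w : κ → ℤ} {r : ι → ℚ}
    (hrep : (fun i => (w i : ℚ)) = ∑ j, r j • fun i => (f j i : ℚ)) (n : ℤ) :
    n • w ∈ AddSubgroup.closure (Set.range f) ↔ ∀ j, ∃ c : ℤ, (c : ℚ) = n * r j := by
  have hcoeff : ∀ c : ι → ℤ, ∑ j, c j • f j = n • w ↔ ∀ j, (c j : ℚ) = n * r j := by
    intro c
    have hcast : (fun i => ((n • w) i : ℚ)) = ∑ j, (n * r j) • fun i => (f j i : ℚ) := by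
      simp only [Pi.smul_apply, smul_eq_mul, Int.cast_mul, ← smul_smul, ← Finset.smul_sum]
      rw [← hrep]
      rfl
    calc ∑ j, c j • f j = n • w
        ↔ (fun i => ((∑ j, c j • f j) i : ℚ)) = fun i => ((n • w) i : ℚ) := by
          simp only [funext_iff, Int.cast_inj]
      _ ↔ ∑ j, (c j : ℚ) • (fun i => (f j i : ℚ)) = ∑ j, (n * r j) • fun i => (f j i : ℚ) := by
          rw [hcast]
          simp [funext_iff, Finset.sum_apply]
      _ ↔ ∀ j, (c j : ℚ) = n * r j := by
          refine ⟨Fintype.linearIndependent_iffₛ.1 hli.intCast _ _, fun h => ?_⟩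
          simp_rw [h]
  rw [← Submodule.span_int_eq_addSubgroupClosure, Submodule.mem_toAddSubgroup,
    Submodule.mem_span_range_iff_exists_fun]
  simp_rw [hcoeff]
  rw [Classical.skolem]

theorem exists_intCast_eq_mul_div_iff_dvd {a q : ℤ} (hq : q ≠ 0) (h : IsCoprime a q) (n : ℤ) :
    (∃ c : ℤ, (c : ℚ) = n * (a / q)) ↔ q ∣ n := by
  rw [← show q ∣ n * a ↔ q ∣ n from ⟨h.symm.dvd_of_dvd_mul_right, (·.mul_right a)⟩]
  have hq' : (q : ℚ) ≠ 0 := by exact_mod_cast hq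
  constructor
  · rintro ⟨c, hc⟩
    refine ⟨c, ?_⟩
    have : (n * a : ℚ) = q * c := by rw [hc]; field_simp
    exact_mod_cast this
  · rintro ⟨c, hc⟩
    refine ⟨c, ?_⟩
    rw [← mul_div_assoc, eq_div_iff hq', mul_comm]
    exact_mod_cast hc.symm

theorem order_of_lifted_zero_eq_lcm_general
    (d : ℕ) (v : Fin (d + 1) → Fin d → ℤ)
    (hli : LinearIndependent ℤ fun j => liftZ (v j))
    (a q : Fin (d + 1) → ℕ)
    (hq : ∀ i, 0 < q i)
    (hcop : ∀ i, Nat.gcd (a i) (q i) = 1)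
    (hrep : (fun i => ((liftZ (0 : Fin d → ℤ)) i : ℚ))
      = ∑ j, ((a j : ℚ) / (q j : ℚ)) • fun i => ((liftZ (v j)) i : ℚ)) :
    addOrderOf ((liftZ (0 : Fin d → ℤ) :
        (Fin (d + 1) → ℤ) ⧸ AddSubgroup.closure (Set.range fun j => liftZ (v j))))
      = Finset.univ.lcm q ∧
    (AddSubgroup.closure
        (insert (liftZ (0 : Fin d → ℤ)) (Set.range fun j => liftZ (v j)))).index
      = (AddSubgroup.closure (Set.range fun j => liftZ (v j))).index
          / Finset.univ.lcm q := by
  set Λ := AddSubgroup.closure (Set.range fun j => liftZ (v j))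
  set w := liftZ (0 : Fin d → ℤ)
  have hrep' : (fun i => (w i : ℚ)) =
      ∑ j, (((a j : ℤ) : ℚ) / ((q j : ℤ) : ℚ)) • fun i => ((liftZ (v j)) i : ℚ) := by
    simpa only [Int.cast_natCast] using hrep
  have hnsmul (n : ℕ) : n • (w : (Fin (d + 1) → ℤ) ⧸ Λ) = 0 ↔ Finset.univ.lcm q ∣ n := by
    rw [← QuotientAddGroup.mk_nsmul, QuotientAddGroup.eq_zero_iff, ← natCast_zsmul,
      zsmul_mem_closure_range_iff hli hrep', Finset.lcm_dvd_iff]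
    simp only [Finset.mem_univ, true_imp_iff]
    refine forall_congr' fun j => ?_
    rw [exists_intCast_eq_mul_div_iff_dvd (by exact_mod_cast (hq j).ne')
      (Nat.isCoprime_iff_coprime.2 (hcop j)), Int.natCast_dvd_natCast]
  have horder : addOrderOf (w : (Fin (d + 1) → ℤ) ⧸ Λ) = Finset.univ.lcm q :=
    Nat.dvd_antisymm (addOrderOf_dvd_of_nsmul_eq_zero ((hnsmul _).2 dvd_rfl))
      ((hnsmul _).1 (addOrderOf_nsmul_eq_zero _))
  have hlcm : 0 < Finset.univ.lcm q :=
    Nat.pos_of_ne_zero (Finset.lcm_ne_zero_iff.2 fun i _ => (hq i).ne')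
  refine ⟨horder, ?_⟩
  rw [Set.insert_eq, AddSubgroup.closure_union, ← AddSubgroup.zmultiples_eq_closure, sup_comm,
    ← AddSubgroup.addOrderOf_mul_index_sup_zmultiples Λ w, horder, Nat.mul_div_cancel_left _ hlcm]

theorem order_of_lifted_zero_eq_lcm
    (d : ℕ) (v : Fin (d + 1) → Fin d → ℤ)
    (hli : LinearIndependent ℤ fun j => liftZ (v j))
    (a q : Fin (d + 1) → ℕ)
    (ha : ∀ i, 0 < a i) (hq : ∀ i, 0 < q i)
    (hcop : ∀ i, Nat.gcd (a i) (q i) = 1)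
    (hsum : ∑ i, (a i : ℚ) / (q i : ℚ) = 1)
    (hrep : (fun i => ((liftZ (0 : Fin d → ℤ)) i : ℚ))
      = ∑ j, ((a j : ℚ) / (q j : ℚ)) • fun i => ((liftZ (v j)) i : ℚ)) :
    addOrderOf ((liftZ (0 : Fin d → ℤ) :
        (Fin (d + 1) → ℤ) ⧸ AddSubgroup.closure (Set.range fun j => liftZ (v j))))
      = Finset.univ.lcm q ∧
    (AddSubgroup.closure
        (insert (liftZ (0 : Fin d → ℤ)) (Set.range fun j => liftZ (v j)))).index
      = (AddSubgroup.closure (Set.range fun j => liftZ (v j))).index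
          / Finset.univ.lcm q :=
  order_of_lifted_zero_eq_lcm_general d v hli a q hq hcop hrep
end

section
/- Let A = {0, v₁,…,v_{d+1}, w} ⊆ ℤ^d consist of d+3 elements whose convex hull is a simplex with vertices v₁,…,v_{d+1}, where v₁,…,v_{d+1} generate ℤ^d. Let C_A be the cone of A, Λ⁺_{(0,1)} = span_ℕ((0,1), ṽ₁,…,ṽ_{d+1}), N' = [ℤ^{d+1} : span_ℤ((0,1), ṽ₁,…,ṽ_{d+1})], and let M_w be the smallest positive integer M with M·N'·w̃ ∈ Λ⁺_{(0,1)}. Then C_A = ⋃_{m=0}^{M_w·N'−1} (m·w̃ + Λ⁺_{(0,1)}). -/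
/-- The embedding `u ↦ (u, 0)` as an additive monoid hom. -/
def iotaZ {d : ℕ} : (Fin d → ℤ) →+ (Fin (d + 1) → ℤ) where
  toFun u := Fin.snoc u 0
  map_zero' := by
    funext i
    refine Fin.lastCases ?_ ?_ i <;> simp
  map_add' u u' := by
    funext i
    refine Fin.lastCases ?_ ?_ i <;> simp

theorem cone_covering_decomposition
    (d : ℕ) (v : Fin (d + 1) → Fin d → ℤ) (w : Fin d → ℤ)
    (A : Set (Fin d → ℤ))
    (hA : A = insert 0 (insert w (Set.range v)))
    (hcard : Nat.card A = d + 3)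
    (hgen : Submodule.span ℤ (Set.range v) = ⊤)
    (haff : AffineIndependent ℝ fun j => castR (v j))
    (hsimplex : convexHull ℝ (castR '' A) = convexHull ℝ (Set.range fun j => castR (v j)))
    (N' : ℕ)
    (hN' : N' = (AddSubgroup.closure
      (insert (liftZ (0 : Fin d → ℤ)) (Set.range fun j => liftZ (v j)))).index)
    (Mw : ℕ) (hMwpos : 0 < Mw)
    (hMw : (Mw * N') • liftZ w ∈ AddSubmonoid.closure
      (insert (liftZ (0 : Fin d → ℤ)) (Set.range fun j => liftZ (v j))))
    (hMwmin : ∀ M : ℕ, 0 < M →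
      (M * N') • liftZ w ∈ AddSubmonoid.closure
        (insert (liftZ (0 : Fin d → ℤ)) (Set.range fun j => liftZ (v j))) → Mw ≤ M) :
    (coneOf A : Set (Fin (d + 1) → ℤ))
      = ⋃ m ∈ Finset.range (Mw * N'),
          (fun y => m • liftZ w + y) '' (AddSubmonoid.closure
            (insert (liftZ (0 : Fin d → ℤ)) (Set.range fun j => liftZ (v j))) :
              Set (Fin (d + 1) → ℤ)) := by
  set S : Set (Fin (d + 1) → ℤ) :=
    insert (liftZ (0 : Fin d → ℤ)) (Set.range fun j => liftZ (v j)) with hS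
  -- Step 1 : the subgroup generated by S is everything, hence N' = 1.
  have hiota : ∀ u : Fin d → ℤ, iotaZ u ∈ AddSubgroup.closure S := by
    intro u
    have hsub : Submodule.span ℤ (Set.range v) ≤
        ((AddSubgroup.closure S).comap iotaZ).toIntSubmodule := by
      rw [Submodule.span_le]
      rintro _ ⟨j, rfl⟩
      have hvj : iotaZ (v j) = liftZ (v j) - liftZ (0 : Fin d → ℤ) := by
        funext i
        refine Fin.lastCases ?_ ?_ i <;>
          simp [iotaZ, liftZ, Fin.snoc_last, Fin.snoc_castSucc]
      have h1 : liftZ (v j) ∈ AddSubgroup.closure S :=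
        AddSubgroup.subset_closure (Set.mem_insert_of_mem _ ⟨j, rfl⟩)
      have h0 : liftZ (0 : Fin d → ℤ) ∈ AddSubgroup.closure S :=
        AddSubgroup.subset_closure (Set.mem_insert _ _)
      show iotaZ (v j) ∈ AddSubgroup.closure S
      rw [hvj]; exact sub_mem h1 h0
    have := hsub (hgen ▸ Submodule.mem_top : u ∈ Submodule.span ℤ (Set.range v))
    exact this
  have htop : AddSubgroup.closure S = ⊤ := by
    rw [eq_top_iff]
    intro x _
    have h0 : liftZ (0 : Fin d → ℤ) ∈ AddSubgroup.closure S :=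
      AddSubgroup.subset_closure (Set.mem_insert _ _)
    have hx : x = iotaZ (fun i => x i.castSucc) +
        (x (Fin.last d)) • liftZ (0 : Fin d → ℤ) := by
      funext i
      refine Fin.lastCases ?_ ?_ i <;>
        simp [iotaZ, liftZ, Fin.snoc_last, Fin.snoc_castSucc]
    rw [hx]
    exact add_mem (hiota _) (zsmul_mem h0 _)
  have hN1 : N' = 1 := by rw [hN', htop, AddSubgroup.index_top]
  have hK : 0 < Mw * N' := by rw [hN1, mul_one]; exact hMwpos
  -- Step 2 : rewrite the cone.
  have himg : liftZ '' A = insert (liftZ w) S := by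
    rw [hA, Set.image_insert_eq, Set.image_insert_eq, ← Set.range_comp, hS,
      Set.insert_comm]
    rfl
  have hcone : coneOf A = AddSubmonoid.closure {liftZ w} ⊔ AddSubmonoid.closure S := by
    rw [coneOf, himg, Set.insert_eq, AddSubmonoid.closure_union]
  ext x
  simp only [Set.mem_iUnion, Finset.mem_range, Set.mem_image, SetLike.mem_coe]
  constructor
  · intro hx
    rw [hcone] at hx
    obtain ⟨y, hy, z, hz, rfl⟩ := AddSubmonoid.mem_sup.mp hx
    obtain ⟨n, rfl⟩ := AddSubmonoid.mem_closure_singleton.mp hy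
    refine ⟨n % (Mw * N'), Nat.mod_lt _ hK,
      (n / (Mw * N')) • ((Mw * N') • liftZ w) + z,
      add_mem (AddSubmonoid.nsmul_mem _ hMw _) hz, ?_⟩
    have : (n % (Mw * N')) • liftZ w + ((n / (Mw * N')) • ((Mw * N') • liftZ w))
        = n • liftZ w := by
      rw [smul_smul, ← add_smul, Nat.mod_add_div']
    rw [← add_assoc, this]
  · rintro ⟨m, hm, y, hy, rfl⟩
    rw [hcone]
    exact AddSubmonoid.mem_sup.mpr
      ⟨m • liftZ w, AddSubmonoid.mem_closure_singleton.mpr ⟨m, rfl⟩, y, hy, rfl⟩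
end

section
/- Let A ⊆ ℝ^d be a set of d+2 points in general position (every d+1 of them affinely independent), and suppose A admits a partition A = X₁ ⊔ X₂ with |X₁| ≥ 3 and |X₂| ≥ 3 such that conv X₁ ∩ conv X₂ ≠ ∅. Then the convex hull of A cannot be written as the union of two d-simplices with vertex sets contained in A whose interiors are disjoint; that is, there do not exist subsets S, T ⊆ A, each consisting of d+1 affinely independent points, with conv A = (conv S) ∪ (conv T) and interior(conv S) ∩ interior(conv T) = ∅. -/
/-!
The `d + 2` points carry an affine dependence `l`, unique up to a scalar and, by general
position, nonzero at every point. Subtracting two convex representations of a common point of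
`conv X₁` and `conv X₂` gives another affine dependence, so the sign classes of `l` are `X₁` and
`X₂`, each with at least three points. A simplex with vertices in `A` is `conv (A ∖ {s})`.

Take the simplices `conv (A ∖ {s})` and `conv (A ∖ {t})`. If `l s` and `l t` have the same
sign (in particular if `s = t`), choose a third point `p` of that sign. The midpoint of `s` and
`t` is not in `conv (A ∖ {s})`, because a representation there would give an affine dependence
that is positive at `s` and nonpositive at `p`. By symmetry it is not in `conv (A ∖ {t})`
either. If the signs differ, the two simplices have a common interior point: its weights in
`conv (A ∖ {s})` and in `conv (A ∖ {t})` differ by `l`.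
-/

open Finset Module

section Dependence

variable {𝕜 E : Type*} [Field 𝕜] [AddCommGroup E] [Module 𝕜 E] {A : Finset E} {v w l : E → 𝕜}

def IsAffineDependence (A : Finset E) (w : E → 𝕜) : Prop :=
  ∑ x ∈ A, w x = 0 ∧ ∑ x ∈ A, w x • x = 0

lemma isAffineDependence_sub (h₀ : ∑ x ∈ A, v x = ∑ x ∈ A, w x)
    (h₁ : ∑ x ∈ A, v x • x = ∑ x ∈ A, w x • x) : IsAffineDependence A (v - w) := by
  simp only [IsAffineDependence, Pi.sub_apply, sub_smul, sum_sub_distrib, h₀, h₁, sub_self,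
    and_self]

lemma IsAffineDependence.sub (hv : IsAffineDependence A v) (hw : IsAffineDependence A w) :
    IsAffineDependence A (v - w) :=
  isAffineDependence_sub (hv.1.trans hw.1.symm) (hv.2.trans hw.2.symm)

lemma IsAffineDependence.const_mul (hw : IsAffineDependence A w) (c : 𝕜) :
    IsAffineDependence A (fun x => c * w x) := by
  simp only [IsAffineDependence, ← mul_sum, mul_smul, ← smul_sum, hw.1, hw.2, mul_zero, smul_zero,
    and_self]

lemma IsAffineDependence.centerMass_add (hl : IsAffineDependence A l) (w : E → 𝕜) :
    A.centerMass (w + l) id = A.centerMass w id := by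
  simp only [centerMass, Pi.add_apply, add_smul, sum_add_distrib, hl.1, hl.2, add_zero, id]

variable [DecidableEq E]

lemma IsAffineDependence.apply_eq_zero {a : E}
    (hind : AffineIndependent 𝕜 ((↑) : A.erase a → E)) (hw : IsAffineDependence A w)
    (hwa : w a = 0) : ∀ x ∈ A, w x = 0 := by
  intro x hx
  obtain rfl | hxa := eq_or_ne x a
  · exact hwa
  refine hind.eq_zero_of_sum_eq_zero_subtype ?_ ?_ x (mem_erase.2 ⟨hxa, hx⟩)
  · rw [sum_erase _ hwa, hw.1]
  · rw [sum_erase _ (by rw [hwa, zero_smul]), hw.2]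

lemma IsAffineDependence.exists_eq_const_mul {a : E}
    (hind : AffineIndependent 𝕜 ((↑) : A.erase a → E)) (hl : IsAffineDependence A l)
    (hla : l a ≠ 0) (hw : IsAffineDependence A w) : ∃ c, ∀ x ∈ A, w x = c * l x := by
  refine ⟨w a / l a, fun x hx => sub_eq_zero.1 ?_⟩
  refine (hw.sub (hl.const_mul (w a / l a))).apply_eq_zero hind ?_ x hx
  simp [hla]

lemma IsAffineDependence.apply_ne_zero
    (hgen : ∀ a ∈ A, AffineIndependent 𝕜 ((↑) : A.erase a → E)) (hw : IsAffineDependence A w)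
    {a : E} (ha : a ∈ A) (hwa : w a ≠ 0) : ∀ x ∈ A, w x ≠ 0 :=
  fun x hx hwx => hwa (hw.apply_eq_zero (hgen x hx) hwx a ha)

end Dependence

section Convex

variable {𝕜 E : Type*} [Field 𝕜] [LinearOrder 𝕜] [IsStrictOrderedRing 𝕜] [AddCommGroup E]
  [Module 𝕜 E] {A : Finset E} {l : E → 𝕜}

lemma exists_weights_on_superset_of_mem_convexHull {B : Finset E} (hBA : B ⊆ A) {y : E}
    (hy : y ∈ convexHull 𝕜 (B : Set E)) :
    ∃ α : E → 𝕜, (∀ x ∈ A, 0 ≤ α x) ∧ (∀ x ∉ B, α x = 0) ∧ ∑ x ∈ A, α x = 1 ∧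
      ∑ x ∈ A, α x • x = y := by
  obtain ⟨α, hα₀, hα₁, rfl⟩ := mem_convexHull'.1 hy
  classical
  refine ⟨(B : Set E).indicator α, fun x _ => Set.indicator_apply_nonneg (hα₀ x),
    fun x hx => Set.indicator_of_notMem hx _, ?_, ?_⟩
  · rw [sum_indicator_subset _ hBA, hα₁]
  · rw [← sum_indicator_subset _ hBA]
    exact sum_congr rfl fun x _ => (Set.indicator_smul_apply_left _ _ id x).symm

variable [DecidableEq E]

lemma exists_isAffineDependence_pos_neg
    (hgen : ∀ a ∈ A, AffineIndependent 𝕜 ((↑) : A.erase a → E)) {X₁ X₂ : Finset E}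
    (h₁ : X₁ ⊆ A) (h₂ : X₂ ⊆ A) (hdisj : Disjoint X₁ X₂)
    (hmeet : (convexHull 𝕜 (X₁ : Set E) ∩ convexHull 𝕜 (X₂ : Set E)).Nonempty) :
    ∃ l : E → 𝕜, IsAffineDependence A l ∧ (∀ x ∈ X₁, 0 < l x) ∧ ∀ x ∈ X₂, l x < 0 := by
  obtain ⟨z, hz₁, hz₂⟩ := hmeet
  obtain ⟨α₁, hα₁, hα₁X, hα₁1, hα₁z⟩ := exists_weights_on_superset_of_mem_convexHull h₁ hz₁
  obtain ⟨α₂, hα₂, hα₂X, hα₂1, hα₂z⟩ := exists_weights_on_superset_of_mem_convexHull h₂ hz₂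
  have hδ : IsAffineDependence A (α₁ - α₂) :=
    isAffineDependence_sub (hα₁1.trans hα₂1.symm) (hα₁z.trans hα₂z.symm)
  have hα₂₁ : ∀ x ∈ X₁, α₂ x = 0 := fun x hx => hα₂X x (disjoint_left.1 hdisj hx)
  have hα₁₂ : ∀ x ∈ X₂, α₁ x = 0 := fun x hx => hα₁X x (disjoint_right.1 hdisj hx)
  obtain ⟨a, ha, hαa⟩ : ∃ a ∈ A, 0 < α₁ a :=
    exists_lt_of_sum_lt (by rw [sum_const_zero, hα₁1]; exact one_pos)
  have haX : a ∈ X₁ := by_contra fun h => hαa.ne' (hα₁X a h)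
  have hne := hδ.apply_ne_zero hgen ha (by simp [hα₂₁ a haX, hαa.ne'])
  refine ⟨α₁ - α₂, hδ, fun x hx => ?_, fun x hx => ?_⟩
  · have := hne x (h₁ hx)
    simp only [Pi.sub_apply, hα₂₁ x hx, sub_zero] at this ⊢
    exact (hα₁ x (h₁ hx)).lt_of_ne' this
  · have := hne x (h₂ hx)
    simp only [Pi.sub_apply, hα₁₂ x hx, zero_sub, neg_ne_zero, neg_neg_iff_pos] at this ⊢
    exact (hα₂ x (h₂ hx)).lt_of_ne' this

lemma IsAffineDependence.sum_smul_notMem_convexHull_erase {p r : E}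
    (hind : AffineIndependent 𝕜 ((↑) : A.erase r → E)) (hl : IsAffineDependence A l)
    (hp : p ∈ A) (hr : r ∈ A) (hlpr : 0 < l p * l r) {γ : E → 𝕜} (hγ : ∑ x ∈ A, γ x = 1)
    (hγp : γ p = 0) (hγr : 0 < γ r) : ∑ x ∈ A, γ x • x ∉ convexHull 𝕜 (A.erase r : Set E) := by
  intro hy
  obtain ⟨α, hα, hαr, hα1, hαy⟩ :=
    exists_weights_on_superset_of_mem_convexHull (erase_subset r A) hy
  obtain ⟨c, hc⟩ := hl.exists_eq_const_mul hind (right_ne_zero_of_mul hlpr.ne')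
    (isAffineDependence_sub (hγ.trans hα1.symm) hαy.symm)
  have hδr : 0 < c * l r := by
    rw [← hc r hr, Pi.sub_apply, hαr r (notMem_erase r A), sub_zero]
    exact hγr
  have hδp : c * l p ≤ 0 := by
    rw [← hc p hp, Pi.sub_apply, hγp, zero_sub, neg_nonpos]
    exact hα p hp
  have hc0 : c ≠ 0 := left_ne_zero_of_mul hδr.ne'
  nlinarith [mul_pos (mul_self_pos.2 hc0) hlpr, mul_nonpos_of_nonpos_of_nonneg hδp hδr.le]

lemma IsAffineDependence.not_convexHull_subset_union {s t p : E}
    (hinds : AffineIndependent 𝕜 ((↑) : A.erase s → E))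
    (hindt : AffineIndependent 𝕜 ((↑) : A.erase t → E)) (hl : IsAffineDependence A l)
    (hs : s ∈ A) (ht : t ∈ A) (hp : p ∈ A) (hps : p ≠ s) (hpt : p ≠ t)
    (hls : 0 < l p * l s) (hlt : 0 < l p * l t) :
    ¬ convexHull 𝕜 (A : Set E) ⊆
      convexHull 𝕜 (A.erase s : Set E) ∪ convexHull 𝕜 (A.erase t : Set E) := by
  set γ : E → 𝕜 := fun x => (if x = s then 1 / 2 else 0) + (if x = t then 1 / 2 else 0)
  have hγ1 : ∑ x ∈ A, γ x = 1 := by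
    simp only [γ, sum_add_distrib, sum_ite_eq', hs, ht, if_true]
    norm_num
  have hγ0 : ∀ x ∈ A, 0 ≤ γ x := fun x _ => by simp only [γ]; split_ifs <;> norm_num
  have hγp : γ p = 0 := by simp [γ, hps, hpt]
  have hγs : 0 < γ s := by simp only [γ]; split_ifs <;> norm_num
  have hγt : 0 < γ t := by simp only [γ]; split_ifs <;> norm_num
  have hmem : ∑ x ∈ A, γ x • x ∈ convexHull 𝕜 (A : Set E) :=
    (convex_convexHull 𝕜 _).sum_mem hγ0 hγ1 fun x hx => subset_convexHull 𝕜 _ hx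
  intro hsub
  rcases hsub hmem with h | h
  · exact hl.sum_smul_notMem_convexHull_erase hinds hp hs hls hγ1 hγp hγs h
  · exact hl.sum_smul_notMem_convexHull_erase hindt hp ht hlt hγ1 hγp hγt h

end Convex

section Interior

variable {E : Type*} [NormedAddCommGroup E] [NormedSpace ℝ E] [FiniteDimensional ℝ E]

lemma centerMass_mem_interior_convexHull {B : Finset E} (hB : AffineIndependent ℝ ((↑) : B → E))
    (hcard : #B = finrank ℝ E + 1) {w : E → ℝ} (hw : ∀ x ∈ B, 0 < w x) :
    B.centerMass w id ∈ interior (convexHull ℝ (B : Set E)) := by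
  let b : AffineBasis B ℝ E :=
    ⟨(↑), hB, hB.affineSpan_eq_top_iff_card_eq_finrank_add_one.2 (by simpa using hcard)⟩
  have hW : 0 < ∑ x ∈ B, w x := sum_pos hw (card_pos.1 (by omega))
  set v : B → ℝ := fun i => w i / ∑ x ∈ B, w x
  have hv : ∑ i, v i = 1 := by
    rw [← sum_div, sum_coe_sort B w, div_self hW.ne']
  have hcm : B.centerMass w id = univ.affineCombination ℝ b v := by
    rw [affineCombination_eq_linear_combination _ _ _ hv, centerMass, smul_sum, ← sum_coe_sort B]
    refine sum_congr rfl fun i _ => ?_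
    simp only [id_eq, smul_smul, div_eq_inv_mul, v]
    rfl
  have hrange : Set.range b = B := Subtype.range_coe
  rw [← hrange, b.interior_convexHull, hcm]
  intro i
  rw [b.coord_apply_combination_of_mem (mem_univ i) hv]
  exact div_pos (hw i i.2) hW

lemma IsAffineDependence.not_disjoint_interior_convexHull_erase [DecidableEq E] {A : Finset E}
    (hcard : #A = finrank ℝ E + 2) {l : E → ℝ} (hl : IsAffineDependence A l) {s t : E}
    (hinds : AffineIndependent ℝ ((↑) : A.erase s → E))
    (hindt : AffineIndependent ℝ ((↑) : A.erase t → E)) (hs : s ∈ A) (ht : t ∈ A)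
    (hls : 0 < l s) (hlt : l t < 0) :
    ¬ Disjoint (interior (convexHull ℝ (A.erase s : Set E)))
      (interior (convexHull ℝ (A.erase t : Set E))) := by
  have hst : s ≠ t := by rintro rfl; linarith
  -- `α` vanishes at `s` and `α + l` vanishes at `t`; both are positive at every other point.
  set α : E → ℝ := fun x => if x = s then 0 else if x = t then -l t else |l x| + 1
  have eq_of_notMem_erase : ∀ {a x : E}, x ∈ A → x ∉ A.erase a → x = a :=
    fun hx hxa => not_ne_iff.1 fun h => hxa (mem_erase.2 ⟨h, hx⟩)
  have hS : A.centerMass α id ∈ interior (convexHull ℝ (A.erase s : Set E)) := by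
    rw [← centerMass_subset id (erase_subset s A) fun x hx hxs => by
      simp [α, eq_of_notMem_erase hx hxs]]
    refine centerMass_mem_interior_convexHull hinds (by rw [card_erase_of_mem hs]; omega) ?_
    intro x hx
    simp only [α, if_neg (ne_of_mem_erase hx)]
    split_ifs
    · linarith
    · positivity
  have hT : A.centerMass α id ∈ interior (convexHull ℝ (A.erase t : Set E)) := by
    rw [← hl.centerMass_add, ← centerMass_subset id (erase_subset t A) fun x hx hxt => by
      simp [α, eq_of_notMem_erase hx hxt, hst.symm]]
    refine centerMass_mem_interior_convexHull hindt (by rw [card_erase_of_mem ht]; omega) ?_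
    intro x hx
    simp only [α, Pi.add_apply, if_neg (ne_of_mem_erase hx)]
    split_ifs with hxs
    · rw [hxs]; linarith
    · linarith [neg_abs_le (l x)]
  exact Set.not_disjoint_iff.2 ⟨_, hS, hT⟩

end Interior

lemma Finset.exists_coe_eq_erase_of_card_add_one {α : Type*} [DecidableEq α] {A : Finset α}
    {S : Set α} (hSA : S ⊆ A) (hcard : Nat.card S + 1 = #A) : ∃ a ∈ A, S = ↑(A.erase a) := by
  lift S to Finset α using A.finite_toSet.subset hSA
  rw [Nat.card_coe_set_eq, Set.ncard_coe_finset] at hcard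
  obtain ⟨a, ha, rfl⟩ := exists_eq_insert_iff.2 ⟨coe_subset.1 hSA, hcard⟩
  exact ⟨a, mem_insert_self a S, by rw [erase_insert ha]⟩

lemma Finset.exists_mem_ne_ne_of_two_lt_card {α : Type*} [DecidableEq α] {X : Finset α}
    (hX : 2 < #X) (s t : α) : ∃ p ∈ X, p ≠ s ∧ p ≠ t := by
  obtain ⟨p, hp⟩ : ((X.erase s).erase t).Nonempty := by
    rw [← card_pos]
    have := pred_card_le_card_erase (s := X) (a := s)
    have := pred_card_le_card_erase (s := X.erase s) (a := t)
    omega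
  simp only [mem_erase] at hp
  exact ⟨p, hp.2.2, hp.2.1, hp.1⟩

theorem no_splitting_into_two_simplices
    (d : ℕ) (A : Set (Fin d → ℝ)) (hfin : A.Finite)
    (hcard : Nat.card A = d + 2)
    (hgenpos : ∀ B ⊆ A, Nat.card B = d + 1 →
      AffineIndependent ℝ (fun p : B => (p : Fin d → ℝ)))
    (X₁ X₂ : Set (Fin d → ℝ))
    (hunion : X₁ ∪ X₂ = A) (hdisj : Disjoint X₁ X₂)
    (hX₁ : 3 ≤ Nat.card X₁) (hX₂ : 3 ≤ Nat.card X₂)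
    (hmeet : (convexHull ℝ X₁ ∩ convexHull ℝ X₂).Nonempty) :
    ¬ ∃ S T : Set (Fin d → ℝ), S ⊆ A ∧ T ⊆ A ∧
      Nat.card S = d + 1 ∧ Nat.card T = d + 1 ∧
      AffineIndependent ℝ (fun p : S => (p : Fin d → ℝ)) ∧
      AffineIndependent ℝ (fun p : T => (p : Fin d → ℝ)) ∧
      convexHull ℝ A = convexHull ℝ S ∪ convexHull ℝ T ∧
      Disjoint (interior (convexHull ℝ S)) (interior (convexHull ℝ T)) := by
  classical
  lift A to Finset (Fin d → ℝ) using hfin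
  have hX₁A : X₁ ⊆ A := hunion ▸ Set.subset_union_left
  have hX₂A : X₂ ⊆ A := hunion ▸ Set.subset_union_right
  lift X₁ to Finset (Fin d → ℝ) using A.finite_toSet.subset hX₁A
  lift X₂ to Finset (Fin d → ℝ) using A.finite_toSet.subset hX₂A
  simp only [Nat.card_coe_set_eq, Set.ncard_coe_finset] at hcard hX₁ hX₂
  norm_cast at hX₁A hX₂A hunion hdisj
  have hgen : ∀ a ∈ A, AffineIndependent ℝ ((↑) : A.erase a → Fin d → ℝ) := fun a ha =>
    hgenpos _ (coe_subset.2 (erase_subset a A))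
      (by rw [Nat.card_coe_set_eq, Set.ncard_coe_finset, card_erase_of_mem ha, hcard]; rfl)
  obtain ⟨l, hl, hl₁, hl₂⟩ := exists_isAffineDependence_pos_neg hgen hX₁A hX₂A hdisj hmeet
  have hsign : ∀ x ∈ A, 0 < l x ∨ l x < 0 := fun x hx => by
    rw [← hunion, mem_union] at hx
    exact hx.imp (hl₁ x) (hl₂ x)
  have hcard' : #A = finrank ℝ (Fin d → ℝ) + 2 := by rw [finrank_fin_fun, hcard]
  rintro ⟨S, T, hSA, hTA, hScard, hTcard, -, -, hcover, hint⟩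
  obtain ⟨s, hs, rfl⟩ := exists_coe_eq_erase_of_card_add_one hSA (by omega)
  obtain ⟨t, ht, rfl⟩ := exists_coe_eq_erase_of_card_add_one hTA (by omega)
  rcases hsign s hs with hls | hls <;> rcases hsign t ht with hlt | hlt
  · obtain ⟨p, hp, hps, hpt⟩ := exists_mem_ne_ne_of_two_lt_card hX₁ s t
    exact hl.not_convexHull_subset_union (hgen s hs) (hgen t ht) hs ht (hX₁A hp) hps hpt
      (mul_pos (hl₁ p hp) hls) (mul_pos (hl₁ p hp) hlt) hcover.le
  · exact hl.not_disjoint_interior_convexHull_erase hcard' (hgen s hs) (hgen t ht) hs ht hls hlt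
      hint
  · exact hl.not_disjoint_interior_convexHull_erase hcard' (hgen t ht) (hgen s hs) ht hs hlt hls
      hint.symm
  · obtain ⟨p, hp, hps, hpt⟩ := exists_mem_ne_ne_of_two_lt_card hX₂ s t
    exact hl.not_convexHull_subset_union (hgen s hs) (hgen t ht) hs ht (hX₂A hp) hps hpt
      (mul_pos_of_neg_of_neg (hl₂ p hp) hls) (mul_pos_of_neg_of_neg (hl₂ p hp) hlt) hcover.le
end
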